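/- For every n ≥ 1, the word α(n)⁺ (α(n) with its last letter incremented) has R_{n+4}[i:] as a suffix if and only if i ≥ 6, where α is defined by α(1) = B_1 R_4 C B_1 R_4 and α(n) = α(n−1)⁺ R_{n+3} C α(n−1)⁺ R_{n+3} for n ≥ 2, with C = 0102030102 and B_1 a fixed word whose suffix agrees with the required pattern 0203 R_3⁺ R_4. -/

import Mathlib

def rho (w : List ℕ) : List ℕ := w.flatMap (fun n => [0, n + 1])

def R (n : ℕ) : List ℕ := rho^[n] [0]

def succW (w : List ℕ) : List ℕ := w.dropLast ++ [w.getLast! + 1]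

/-- The constant word C = 0102030102. -/
def C : List ℕ := [0, 1, 0, 2, 0, 3, 0, 1, 0, 2]

/-- The word 0203·R₃⁺·R₄⁺·⋯·R_{n+2}⁺·R_{n+3}. -/
def S (n : ℕ) : List ℕ :=
  [0, 2, 0, 3] ++ ((List.range n).map (fun j => succW (R (j + 3)))).flatten ++ R (n + 3)

/-!
Both `R_{n+4}` and `(0203·R₃⁺·⋯·R_{n+2}⁺·R_{n+3})⁺` end in the same word
`X = R₃⁺·R₄⁺·⋯·R_{n+3}⁺`: the first is `01020103·X`, the second `0203·X`, and the second is a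
suffix of `α(n)⁺`. Two suffixes `u·X` and `v·X` of one word force `u` and `v` to be
suffix-comparable, and among the suffixes `(01020103)[i:]` only those with `i ≥ 6` are comparable
with `0203`.
-/

lemma succW_append_singleton (a : List ℕ) (x : ℕ) : succW (a ++ [x]) = a ++ [x + 1] := by
  rw [succW, List.dropLast_concat, List.getLast!_of_getLast? List.getLast?_concat]

lemma succW_append (a : List ℕ) {b : List ℕ} (hb : b ≠ []) : succW (a ++ b) = a ++ succW b := by
  obtain ⟨c, x, rfl⟩ := (List.eq_nil_or_concat b).resolve_left hb
  rw [List.concat_eq_append, ← List.append_assoc, succW_append_singleton, succW_append_singleton,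
    List.append_assoc]

lemma List.IsSuffix.succW {s w : List ℕ} (h : s <:+ w) (hs : s ≠ []) : succW s <:+ succW w := by
  obtain ⟨t, rfl⟩ := h
  rw [succW_append _ hs]
  exact List.suffix_append t _

lemma rho_append (a b : List ℕ) : rho (a ++ b) = rho a ++ rho b := by
  simp [rho]

lemma rho_succW {w : List ℕ} (hw : w ≠ []) : rho (succW w) = succW (rho w) := by
  obtain ⟨c, x, rfl⟩ := (List.eq_nil_or_concat w).resolve_left hw
  rw [List.concat_eq_append, succW_append_singleton, rho_append, rho_append,
    succW_append _ (by simp [rho])]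
  rfl

lemma R_succ_eq_rho (n : ℕ) : R (n + 1) = rho (R n) := by
  rw [R, Function.iterate_succ_apply', ← R]

lemma R_ne_nil (n : ℕ) : R n ≠ [] := by
  induction n with
  | zero => simp [R]
  | succ n ih => simpa [R_succ_eq_rho, rho] using List.exists_mem_of_ne_nil _ ih

lemma R_succ (n : ℕ) : R (n + 1) = R n ++ succW (R n) := by
  induction n with
  | zero => decide
  | succ n ih =>
    rw [R_succ_eq_rho (n + 1), ih, rho_append, rho_succW (R_ne_nil n), ← R_succ_eq_rho, ← ih]

def succRChain (n : ℕ) : List ℕ :=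
  ((List.range (n + 1)).map (fun j => succW (R (j + 3)))).flatten

lemma R_add_four (n : ℕ) : R (n + 4) = [0, 1, 0, 2, 0, 1, 0, 3] ++ succRChain n := by
  induction n with
  | zero => decide
  | succ n ih =>
    rw [R_succ, succRChain, List.range_succ (n := n + 1)]
    nth_rw 1 [ih]
    simp [succRChain]

lemma succW_S (n : ℕ) : succW (S n) = [0, 2, 0, 3] ++ succRChain n := by
  rw [S, succW_append _ (R_ne_nil _), succRChain, List.range_succ]
  simp

lemma List.suffix_or_suffix_of_append_suffix {α : Type*} {u v x w : List α}
    (hu : u ++ x <:+ w) (hv : v ++ x <:+ w) : u <:+ v ∨ v <:+ u :=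
  (List.suffix_or_suffix_of_suffix hu hv).imp List.suffix_append_self_iff.mp
    List.suffix_append_self_iff.mp

lemma drop_suffix_iff_six_le_of_suffix {x w : List ℕ} (hw : [0, 2, 0, 3] ++ x <:+ w) (i : ℕ) :
    ([0, 1, 0, 2, 0, 1, 0, 3] ++ x).drop i <:+ w ↔ 6 ≤ i := by
  constructor
  · intro h
    by_contra! hi
    rw [List.drop_append_of_le_length (hi.trans (by decide)).le] at h
    have hcomp := List.suffix_or_suffix_of_append_suffix h hw
    interval_cases i <;> revert hcomp <;> decide
  · intro hi
    have h6 : ([0, 1, 0, 2, 0, 1, 0, 3] ++ x).drop 6 <:+ w :=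
      (List.suffix_append [0, 2] _).trans hw
    rw [show i = 6 + (i - 6) by omega, ← List.drop_drop]
    exact (List.drop_suffix _ _).trans h6

theorem suffix_iff_ge_six_general (α : ℕ → List ℕ)
    (hsuf : ∀ n, 1 ≤ n → S n <:+ α n) :
    ∀ n, 1 ≤ n → ∀ i : ℕ, ((R (n + 4)).drop i <:+ succW (α n) ↔ 6 ≤ i) := by
  intro n hn
  have hS : [0, 2, 0, 3] ++ succRChain n <:+ succW (α n) := by
    rw [← succW_S]
    exact (hsuf n hn).succW (by simp [S])
  rw [R_add_four]
  exact drop_suffix_iff_six_le_of_suffix hS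

/-- For n ≥ 1, R_{n+4}[i:] is a suffix of α(n)⁺ iff i ≥ 6; here α satisfies the
recursion α(n) = α(n−1)⁺ · R_{n+3} · C · α(n−1)⁺ · R_{n+3} for n ≥ 2, and
0203·R₃⁺·⋯·R_{n+2}⁺·R_{n+3} is a suffix of α(n) for n ≥ 1. -/
theorem suffix_iff_ge_six (α : ℕ → List ℕ)
    (hrec : ∀ n, 2 ≤ n →
      α n = succW (α (n - 1)) ++ R (n + 3) ++ C ++ succW (α (n - 1)) ++ R (n + 3))
    (hsuf : ∀ n, 1 ≤ n → S n <:+ α n) :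
    ∀ n, 1 ≤ n → ∀ i : ℕ, ((R (n + 4)).drop i <:+ succW (α n) ↔ 6 ≤ i) :=
  suffix_iff_ge_six_general α hsuf
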